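/- arXiv:1901.06624 — 3 statements merged into one kernel-verified Lean document; each statement's English description precedes it below -/
import Mathlib

section
/- Let V be a free abelian group of finite rank equipped with a symplectic (nondegenerate alternating unimodular) bilinear form ω, and let μ : V → A be a group homomorphism to a finitely generated abelian group A. Then there exists a symplectic subspace W of V of genus at most rank(A) (i.e. W has a symplectic basis of 2·rank(A) elements and V = W ⊕ W^⊥) such that μ vanishes on W^⊥. -/
/-- `W` is a symplectic subspace of `V` of genus `h` with respect to the bilinear form `ω`:
it has a symplectic basis `a₁, b₁, …, a_h, b_h` and `V = W ⊕ W^⊥`. -/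
def IsGenusSympSubspace {V : Type*} [AddCommGroup V] [Module ℤ V]
    (ω : LinearMap.BilinForm ℤ V) (W : Submodule ℤ V) (h : ℕ) : Prop :=
  ∃ a b : Fin h → V,
    W = Submodule.span ℤ (Set.range a ∪ Set.range b) ∧
    (∀ i j, ω (a i) (a j) = 0) ∧ (∀ i j, ω (b i) (b j) = 0) ∧
    (∀ i j, ω (a i) (b j) = if i = j then 1 else 0) ∧
    IsCompl W (ω.orthogonal W)

attribute [local instance 3000] Submodule.module

private lemma smul_bridge' {V : Type*} [AddCommGroup V] [Module ℤ V] (c : ℤ) (v : V) :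
    @HSMul.hSMul ℤ V V (@instHSMul ℤ V (@SMulZeroClass.toSMul ℤ V _
      (@SMulWithZero.toSMulZeroClass ℤ V _ _ (@MulActionWithZero.toSMulWithZero ℤ V _ _
        (@Module.toMulActionWithZero ℤ V _ _ _))))) c v = c • v := by
  simpa using Int.cast_smul_eq_zsmul ℤ c v

private lemma mem_orth_span_iff' {V : Type*} [AddCommGroup V] [Module ℤ V]
    (ω : LinearMap.BilinForm ℤ V) (S : Set V) (v : V) :
    v ∈ ω.orthogonal (Submodule.span ℤ S) ↔ ∀ s ∈ S, ω s v = 0 := by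
  constructor
  · exact fun h s hs => h s (Submodule.subset_span hs)
  · intro h
    have key : ∀ n ∈ Submodule.span ℤ S, ω n v = 0 := by
      intro n hn
      induction hn using Submodule.span_induction with
      | mem s hs => exact h s hs
      | zero => rw [map_zero, LinearMap.zero_apply]
      | add p q _ _ hp hq => rw [map_add, LinearMap.add_apply, hp, hq, add_zero]
      | smul c p _ hp => rw [LinearMap.map_smul, LinearMap.smul_apply, hp, smul_zero]
    exact fun n hn => key n hn

private lemma bsmul_right' {V : Type*} [AddCommGroup V] [Module ℤ V]
    (ω : LinearMap.BilinForm ℤ V) (c : ℤ) (u v : V) : ω u (c • v) = c * ω u v := by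
  simp only [← smul_bridge']
  rw [LinearMap.map_smul]
  rfl

private lemma bsmul_left' {V : Type*} [AddCommGroup V] [Module ℤ V]
    (ω : LinearMap.BilinForm ℤ V) (c : ℤ) (u v : V) : ω (c • u) v = c * ω u v := by
  simp only [← smul_bridge']
  rw [LinearMap.map_smul, LinearMap.smul_apply]
  rfl

private lemma int_smul_eq_zero' {V : Type*} [AddCommGroup V] [Module ℤ V] [Module.Free ℤ V]
    {c : ℤ} {v : V} (hc : c ≠ 0) (h : c • v = 0) : v = 0 := by
  rw [← smul_bridge'] at h
  rcases smul_eq_zero.mp h with h' | h'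
  · exact absurd h' hc
  · exact h'

private lemma key_lemma (A : Type*) [AddCommGroup A] : ∀ (m : ℕ) (V : Type*) [AddCommGroup V]
    [Module ℤ V] [Module.Free ℤ V] [Module.Finite ℤ V]
    (ω : LinearMap.BilinForm ℤ V), ω.IsAlt →
    (Function.Bijective fun v : V => ω v) →
    ∀ (μ : V →+ A) (x : Fin m → A),
    (∀ v, μ v ∈ AddSubgroup.closure (Set.range x)) →
    ∃ h ≤ m, ∃ W : Submodule ℤ V,
      IsGenusSympSubspace ω W h ∧ ∀ v ∈ ω.orthogonal W, μ v = 0 := by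
  intro m
  induction m with
  | zero =>
    intro V _ _ _ _ ω halt hunimod μ x hx
    refine ⟨0, le_refl 0, ⊥, ⟨Fin.elim0, Fin.elim0, ?_, ?_, ?_, ?_, ?_⟩, ?_⟩
    · simp
    · exact fun i => i.elim0
    · exact fun i => i.elim0
    · exact fun i => i.elim0
    · rw [LinearMap.BilinForm.orthogonal_bot]
      exact isCompl_bot_top
    · intro v _
      have := hx v
      simpa [Set.range_eq_empty] using this
  | succ m IH =>
    intro V _ _ _ _ ω halt hunimod μ x hx
    classical
    set T := AddSubgroup.closure (Set.range (x ∘ Fin.succ)) with hT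
    let π : A →+ A ⧸ T := QuotientAddGroup.mk' T
    let ν : V →+ A ⧸ T := π.comp μ
    have hν : ∀ v, ν v ∈ AddSubgroup.zmultiples (π (x 0)) := by
      intro v
      have hle : AddSubgroup.closure (Set.range x) ≤
          (AddSubgroup.zmultiples (π (x 0))).comap π := by
        rw [AddSubgroup.closure_le]
        rintro a ⟨i, rfl⟩
        induction i using Fin.cases with
        | zero => exact AddSubgroup.mem_comap.2 (AddSubgroup.mem_zmultiples _)
        | succ j =>
          have hmem : x (Fin.succ j) ∈ T := AddSubgroup.subset_closure ⟨j, rfl⟩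
          have h0 : π (x (Fin.succ j)) = 0 := (QuotientAddGroup.eq_zero_iff _).2 hmem
          exact AddSubgroup.mem_comap.2 (by rw [h0]; exact zero_mem _)
      exact hle (hx v)
    -- construct the functional lam
    let e := Module.Free.chooseBasis ℤ V
    have hchoice : ∀ i, ∃ n : ℤ, n • π (x 0) = ν (e i) := fun i =>
      AddSubgroup.mem_zmultiples_iff.mp (hν (e i))
    choose n hn using hchoice
    let lam : V →ₗ[ℤ] ℤ := e.constr ℕ n
    have hlamb : ∀ i, lam (e i) = n i := fun i => e.constr_basis ℕ n i
    have heq : ∀ v, ν v = lam v • π (x 0) := by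
      intro v
      have hrep := e.sum_repr v
      have step1 : ν v = ∑ i, (e.repr v i * n i) • π (x 0) := by
        conv_lhs => rw [← hrep]
        rw [map_sum]
        refine Finset.sum_congr rfl fun i _ => ?_
        rw [smul_bridge', map_zsmul, ← hn i, smul_smul]
      have step2 : lam v = ∑ i, e.repr v i * n i := by
        conv_lhs => rw [← hrep]
        rw [map_sum]
        refine Finset.sum_congr rfl fun i _ => ?_
        rw [LinearMap.map_smul, hlamb i, smul_eq_mul]
      rw [step1, step2, Finset.sum_smul]
    by_cases hlam0 : lam = 0
    · -- degenerate case : ν = 0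
      have hx' : ∀ v, μ v ∈ AddSubgroup.closure (Set.range (x ∘ Fin.succ)) := by
        intro v
        have h0 : ν v = 0 := by rw [heq v, hlam0]; simp
        exact (QuotientAddGroup.eq_zero_iff _).1 h0
      obtain ⟨h, hhm, W, hW, hμ⟩ := IH V ω halt hunimod μ (x ∘ Fin.succ) hx'
      exact ⟨h, hhm.trans (Nat.le_succ m), W, hW, hμ⟩
    · -- main case
      have hprin : (LinearMap.range lam).IsPrincipal := inferInstance
      set g := Submodule.IsPrincipal.generator (LinearMap.range lam) with hg
      have hgdvd : ∀ v, g ∣ lam v := by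
        intro v
        have hv : lam v ∈ LinearMap.range lam := ⟨v, rfl⟩
        exact (Submodule.IsPrincipal.mem_iff_generator_dvd _).1 hv
      have hg0 : g ≠ 0 := by
        intro h0
        apply hlam0
        apply LinearMap.ext
        intro v
        obtain ⟨c, hc⟩ := hgdvd v
        rw [LinearMap.zero_apply, hc, h0, zero_mul]
      let lam' : V →ₗ[ℤ] ℤ :=
        { toFun := fun v => lam v / g
          map_add' := fun u v => by
            obtain ⟨cu, hcu⟩ := hgdvd u
            obtain ⟨cv, hcv⟩ := hgdvd v
            simp only [map_add, hcu, hcv, ← mul_add]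
            rw [Int.mul_ediv_cancel_left _ hg0, Int.mul_ediv_cancel_left _ hg0,
              Int.mul_ediv_cancel_left _ hg0]
          map_smul' := fun c v => by
            obtain ⟨cv, hcv⟩ := hgdvd v
            simp only [map_smul, hcv, RingHom.id_apply, smul_eq_mul]
            rw [mul_left_comm, Int.mul_ediv_cancel_left _ hg0,
              Int.mul_ediv_cancel_left _ hg0] }
      have hlam'mul : ∀ v, g * lam' v = lam v := fun v => Int.mul_ediv_cancel' (hgdvd v)
      obtain ⟨bv, hbv⟩ := Submodule.IsPrincipal.generator_mem (LinearMap.range lam)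
      have hlam'b : lam' bv = 1 := by
        show lam bv / g = 1
        rw [hbv, Int.ediv_self hg0]
      obtain ⟨av, hav⟩ := hunimod.2 lam'
      have hωa : ∀ v, ω av v = lam' v := fun v => by
        rw [show ω av = lam' from hav]
      have hab : ω av bv = 1 := by rw [hωa, hlam'b]
      have hba : ω bv av = -1 := by
        have h1 := LinearMap.IsAlt.neg halt av bv
        rw [hab] at h1
        rw [← h1]
      set W₁ : Submodule ℤ V := Submodule.span ℤ {av, bv} with hW₁
      set V' : Submodule ℤ V := ω.orthogonal W₁ with hV'
      have hmemV' : ∀ v, v ∈ V' ↔ ω av v = 0 ∧ ω bv v = 0 := by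
        intro v
        rw [hV', hW₁, mem_orth_span_iff']
        simp
      -- decomposition of arbitrary element
      have hdecomp : ∀ v : V, v + (ω bv v) • av - (ω av v) • bv ∈ V' := by
        intro v
        rw [hmemV']
        constructor
        · rw [map_sub, map_add, bsmul_right', bsmul_right', halt av, hab]
          ring
        · rw [map_sub, map_add, bsmul_right', bsmul_right', halt bv, hba]
          ring
      have hcompl1 : IsCompl W₁ V' := by
        constructor
        · rw [Submodule.disjoint_def]
          intro v hv1 hv2
          rw [hmemV'] at hv2
          obtain ⟨c₁, c₂, hcc⟩ := Submodule.mem_span_pair.1 hv1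
          rw [smul_bridge', smul_bridge'] at hcc
          have h1 : ω av v = c₂ := by
            rw [← hcc, map_add, bsmul_right', bsmul_right', halt av, hab]
            ring
          have h2 : ω bv v = -c₁ := by
            rw [← hcc, map_add, bsmul_right', bsmul_right', halt bv, hba]
            ring
          rw [hv2.1] at h1
          rw [hv2.2] at h2
          rw [← hcc, ← h1, show c₁ = 0 from by omega]
          simp
        · rw [codisjoint_iff, eq_top_iff]
          intro v _
          rw [Submodule.mem_sup]
          refine ⟨(ω av v) • bv - (ω bv v) • av, ?_, v + (ω bv v) • av - (ω av v) • bv,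
            hdecomp v, by abel⟩
          apply Submodule.sub_mem
          · rw [← smul_bridge']
            exact Submodule.smul_mem _ _ (Submodule.subset_span (by simp))
          · rw [← smul_bridge']
            exact Submodule.smul_mem _ _ (Submodule.subset_span (by simp))
      -- facts about members of V'
      have horthosym : ∀ v ∈ V', ∀ w ∈ W₁, ω v w = 0 := by
        intro v hv w hw
        have h0 : ω w v = 0 := hv w hw
        rw [← LinearMap.IsAlt.neg halt, h0, neg_zero]
      -- instances on V'
      haveI hfin' : Module.Finite ℤ ↥V' :=
        Module.Finite.iff_fg.2 (IsNoetherian.noetherian V')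
      haveI hnzsd' : NoZeroSMulDivisors ℤ ↥V' := by
        refine ⟨fun {c x} h => ?_⟩
        by_cases hc : c = 0
        · exact Or.inl hc
        · refine Or.inr ?_
          have h3 : c • (x : V) = 0 := by
            have h4 := congrArg Subtype.val h
            simpa using h4
          exact Subtype.ext (int_smul_eq_zero' hc h3)
      haveI hfree' : Module.Free ℤ ↥V' := Module.free_of_finite_type_torsion_free'
      -- restricted form
      let ω' := ω.restrict V'
      have hω'apply : ∀ u v : ↥V', ω' u v = ω u v := fun u v => rfl
      have halt' : ω'.IsAlt := fun v => halt v
      -- projection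
      let proj := Submodule.linearProjOfIsCompl V' W₁ hcompl1.symm
      have hunimod' : Function.Bijective fun v : ↥V' => ω' v := by
        constructor
        · intro u v huv
          apply Subtype.ext
          apply hunimod.1
          show ω u.val = ω v.val
          apply LinearMap.ext
          intro w
          have hwmem : w ∈ W₁ ⊔ V' := by rw [hcompl1.sup_eq_top]; trivial
          obtain ⟨w₁, hw₁, w', hw', rfl⟩ := Submodule.mem_sup.1 hwmem
          have h1 : ω u.val w₁ = 0 := horthosym u.val u.2 w₁ hw₁
          have h2 : ω v.val w₁ = 0 := horthosym v.val v.2 w₁ hw₁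
          have h3 : ω u.val w' = ω v.val w' :=
            congrArg (fun f : ↥V' →ₗ[ℤ] ℤ => f ⟨w', hw'⟩) huv
          rw [map_add, map_add, h1, h2, h3]
        · intro f
          obtain ⟨xv, hxv⟩ := hunimod.2 (f.comp proj)
          have hxvapp : ∀ w, ω xv w = f (proj w) := fun w => by
            rw [show ω xv = f.comp proj from hxv]; rfl
          have hxV' : xv ∈ V' := by
            intro nn hnn
            show ω nn xv = 0
            rw [← LinearMap.IsAlt.neg halt]
            have : proj nn = 0 := Submodule.linearProjOfIsCompl_apply_right hcompl1.symm ⟨nn, hnn⟩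
            rw [hxvapp nn, this, map_zero, neg_zero]
          refine ⟨⟨xv, hxV'⟩, ?_⟩
          apply LinearMap.ext
          intro u
          show ω' ⟨xv, hxV'⟩ u = f u
          rw [hω'apply, hxvapp]
          congr 1
          exact Submodule.linearProjOfIsCompl_apply_left hcompl1.symm u
      -- restricted marking
      let μ' : ↥V' →+ A := μ.comp V'.subtype.toAddMonoidHom
      have hx' : ∀ v' : ↥V', μ' v' ∈ AddSubgroup.closure (Set.range (x ∘ Fin.succ)) := by
        intro v'
        have h1 : ω av v'.val = 0 := ((hmemV' _).1 v'.2).1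
        have h2 : lam v'.val = 0 := by
          rw [← hlam'mul, ← hωa, h1, mul_zero]
        have h3 : ν v'.val = 0 := by rw [heq, h2, zero_smul]
        have h4 : μ v'.val ∈ T := (QuotientAddGroup.eq_zero_iff _).1 h3
        rw [hT] at h4
        exact h4
      obtain ⟨h', hh'm, W', ⟨a', b', hW'span, haa', hbb', hab', hcompl'⟩, hμ'⟩ :=
        IH ↥V' ω' halt' hunimod' μ' (x ∘ Fin.succ) hx'
      -- assemble the answer
      refine ⟨h' + 1, Nat.succ_le_succ hh'm, ?_⟩
      set a : Fin (h' + 1) → V := Fin.cons av (fun i => (a' i).val) with haf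
      set b : Fin (h' + 1) → V := Fin.cons bv (fun i => (b' i).val) with hbf
      set W : Submodule ℤ V := Submodule.span ℤ (Set.range a ∪ Set.range b) with hW
      have hsetparts : Set.range a = insert av (Set.range fun i => (a' i).val) := by
        rw [haf, Fin.range_cons]
      have hsetpartsb : Set.range b = insert bv (Set.range fun i => (b' i).val) := by
        rw [hbf, Fin.range_cons]
      -- elements of V' are orthogonal to a'v, b'v
      have hV'av : ∀ v ∈ V', ω av v = 0 := fun v hv => ((hmemV' v).1 hv).1
      have hV'bv : ∀ v ∈ V', ω bv v = 0 := fun v hv => ((hmemV' v).1 hv).2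
      have hV'av' : ∀ v ∈ V', ω v av = 0 := fun v hv =>
        horthosym v hv av (Submodule.subset_span (by simp))
      have hV'bv' : ∀ v ∈ V', ω v bv = 0 := fun v hv =>
        horthosym v hv bv (Submodule.subset_span (by simp))
      -- characterization of orthogonal of W
      have horthW : ∀ v, v ∈ ω.orthogonal W ↔
          (ω av v = 0 ∧ ω bv v = 0 ∧ (∀ i, ω (a' i).val v = 0) ∧ (∀ i, ω (b' i).val v = 0)) := by
        intro v
        rw [hW, mem_orth_span_iff']
        constructor
        · intro H
          refine ⟨H av (Or.inl (by rw [hsetparts]; exact Set.mem_insert _ _)),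
            H bv (Or.inr (by rw [hsetpartsb]; exact Set.mem_insert _ _)), fun i => ?_, fun i => ?_⟩
          · exact H _ (Or.inl (by rw [hsetparts]; exact Set.mem_insert_of_mem _ ⟨i, rfl⟩))
          · exact H _ (Or.inr (by rw [hsetpartsb]; exact Set.mem_insert_of_mem _ ⟨i, rfl⟩))
        · rintro ⟨H1, H2, H3, H4⟩ s hs
          rcases hs with hs | hs
          · rw [hsetparts] at hs
            rcases hs with rfl | ⟨i, rfl⟩
            · exact H1
            · exact H3 i
          · rw [hsetpartsb] at hs
            rcases hs with rfl | ⟨i, rfl⟩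
            · exact H2
            · exact H4 i
      -- a member of orthogonal W gives a member of orthogonal W' in V'
      have horthW_to' : ∀ v (hv : v ∈ ω.orthogonal W),
          (⟨v, (hmemV' v).2 ⟨((horthW v).1 hv).1, ((horthW v).1 hv).2.1⟩⟩ : ↥V')
            ∈ ω'.orthogonal W' := by
        intro v hv
        obtain ⟨H1, H2, H3, H4⟩ := (horthW v).1 hv
        rw [hW'span]
        rw [mem_orth_span_iff']
        rintro s (⟨i, rfl⟩ | ⟨i, rfl⟩)
        · exact H3 i
        · exact H4 i
      -- W as a sup
      have hmapW' : Submodule.map V'.subtype W' =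
          Submodule.span ℤ ((Set.range fun i => (a' i).val) ∪ (Set.range fun i => (b' i).val)) := by
        rw [hW'span, Submodule.map_span]
        congr 1
        rw [Set.image_union]
        congr 1 <;> · rw [← Set.range_comp]; rfl
      have hWsup : W = W₁ ⊔ Submodule.map V'.subtype W' := by
        rw [hW, hW₁, hmapW', ← Submodule.span_union]
        congr 1
        rw [hsetparts, hsetpartsb]
        ext z
        simp only [Set.mem_union, Set.mem_insert_iff, Set.mem_singleton_iff]
        tauto
      have hmapW'leV' : Submodule.map V'.subtype W' ≤ V' := by
        rintro z ⟨u, _, rfl⟩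
        exact u.2
      refine ⟨W, ?_, ?_⟩
      · -- IsGenusSympSubspace
        refine ⟨a, b, rfl, ?_, ?_, ?_, ?_⟩
        · intro i j
          induction i using Fin.cases with
          | zero =>
            induction j using Fin.cases with
            | zero => simpa [haf] using halt av
            | succ j => simpa [haf] using hV'av _ (a' j).2
          | succ i =>
            induction j using Fin.cases with
            | zero => simpa [haf] using hV'av' _ (a' i).2
            | succ j =>
              have := haa' i j
              rw [hω'apply] at this
              simpa [haf] using this
        · intro i j
          induction i using Fin.cases with
          | zero =>
            induction j using Fin.cases with
            | zero => simpa [hbf] using halt bv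
            | succ j => simpa [hbf] using hV'bv _ (b' j).2
          | succ i =>
            induction j using Fin.cases with
            | zero => simpa [hbf] using hV'bv' _ (b' i).2
            | succ j =>
              have := hbb' i j
              rw [hω'apply] at this
              simpa [hbf] using this
        · intro i j
          induction i using Fin.cases with
          | zero =>
            induction j using Fin.cases with
            | zero => simpa [haf, hbf] using hab
            | succ j =>
              have hne : (0 : Fin (h' + 1)) ≠ j.succ := (Fin.succ_ne_zero j).symm
              simp only [haf, hbf, Fin.cons_zero, Fin.cons_succ, if_neg hne]
              exact hV'av _ (b' j).2
          | succ i =>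
            induction j using Fin.cases with
            | zero =>
              have hne : (i.succ : Fin (h' + 1)) ≠ 0 := Fin.succ_ne_zero i
              simp only [haf, hbf, Fin.cons_zero, Fin.cons_succ, if_neg hne]
              exact hV'bv' _ (a' i).2
            | succ j =>
              have := hab' i j
              rw [hω'apply] at this
              simp only [haf, hbf, Fin.cons_succ, Fin.succ_inj]
              rw [this]
        · -- IsCompl
          constructor
          · rw [Submodule.disjoint_def]
            intro v hvW hvOrth
            obtain ⟨H1, H2, H3, H4⟩ := (horthW v).1 hvOrth
            rw [hWsup] at hvW
            obtain ⟨w₁, hw₁, w₂, hw₂, rfl⟩ := Submodule.mem_sup.1 hvW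
            have hw₂V' : w₂ ∈ V' := hmapW'leV' hw₂
            obtain ⟨c₁, c₂, hcc⟩ := Submodule.mem_span_pair.1 hw₁
            rw [smul_bridge', smul_bridge'] at hcc
            have e1 : ω av (w₁ + w₂) = c₂ := by
              rw [map_add, hV'av _ hw₂V', add_zero, ← hcc, map_add,
                bsmul_right', bsmul_right', halt av, hab]
              ring
            have e2 : ω bv (w₁ + w₂) = -c₁ := by
              rw [map_add, hV'bv _ hw₂V', add_zero, ← hcc, map_add,
                bsmul_right', bsmul_right', halt bv, hba]
              ring
            rw [H1] at e1
            rw [H2] at e2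
            have hc₁ : c₁ = 0 := by omega
            have hc₂ : c₂ = 0 := by omega
            have hw₁0 : w₁ = 0 := by rw [← hcc, hc₁, hc₂]; simp
            have hvOrth2 : w₂ ∈ ω.orthogonal W := by
              rw [hw₁0, zero_add] at hvOrth; exact hvOrth
            rw [hw₁0, zero_add]
            -- now w₂ ∈ map W' and orthogonal to W
            obtain ⟨u', hu'W', hu'val⟩ := hw₂
            have hvv' := horthW_to' w₂ hvOrth2
            have : u' = ⟨w₂, hw₂V'⟩ := Subtype.ext hu'val
            rw [this] at hu'W'
            have := hcompl'.disjoint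
            rw [Submodule.disjoint_def] at this
            have h0 : (⟨w₂, hw₂V'⟩ : ↥V') = 0 := this _ hu'W' hvv'
            simpa using congrArg Subtype.val h0
          · rw [codisjoint_iff, eq_top_iff]
            intro v _
            rw [Submodule.mem_sup]
            set v1 : V := v + (ω bv v) • av - (ω av v) • bv with hv1
            have hv1V' : v1 ∈ V' := hdecomp v
            have hsup' : (⟨v1, hv1V'⟩ : ↥V') ∈ W' ⊔ ω'.orthogonal W' := by
              rw [hcompl'.sup_eq_top]; trivial
            obtain ⟨u, huW', z, hz, huz⟩ := Submodule.mem_sup.1 hsup'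
            refine ⟨(ω av v) • bv - (ω bv v) • av + u.val, ?_, z.val, ?_, ?_⟩
            · apply Submodule.add_mem
              · rw [hWsup]
                apply Submodule.mem_sup_left
                apply Submodule.sub_mem
                · rw [← smul_bridge']
                  exact Submodule.smul_mem _ _ (Submodule.subset_span (by simp))
                · rw [← smul_bridge']
                  exact Submodule.smul_mem _ _ (Submodule.subset_span (by simp))
              · rw [hWsup]
                exact Submodule.mem_sup_right ⟨u, huW', rfl⟩
            · rw [horthW]
              refine ⟨hV'av _ z.2, hV'bv _ z.2, fun i => ?_, fun i => ?_⟩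
              · have ha'W' : a' i ∈ W' := by
                  rw [hW'span]
                  exact Submodule.subset_span (Or.inl ⟨i, rfl⟩)
                have := hz (a' i) ha'W'
                exact this
              · have hb'W' : b' i ∈ W' := by
                  rw [hW'span]
                  exact Submodule.subset_span (Or.inr ⟨i, rfl⟩)
                exact hz (b' i) hb'W'
            · have hval : u.val + z.val = v1 := by
                have := congrArg Subtype.val huz
                simpa using this
              rw [add_assoc, hval, hv1]
              abel
      · -- vanishing of μ on orthogonal of W
        intro v hv
        have hvv' := horthW_to' v hv
        exact hμ' _ hvv'

/-- Let `V` be a free abelian group of finite rank with a symplectic (nondegenerate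
alternating unimodular) form `ω`, and `μ : V → A` a homomorphism to a finitely generated
abelian group.  Then there is a symplectic subspace `W` of genus at most `rank A`
such that `μ` vanishes on `W^⊥`. -/
theorem destabilize_abelian_marking
    (V : Type*) [AddCommGroup V] [Module ℤ V] [Module.Free ℤ V] [Module.Finite ℤ V]
    (ω : LinearMap.BilinForm ℤ V) (halt : ω.IsAlt)
    (hunimod : Function.Bijective fun v : V => ω v)
    (A : Type*) [AddCommGroup A] [AddGroup.FG A] (μ : V →+ A) :
    ∃ (h : ℕ) (W : Submodule ℤ V), h ≤ AddGroup.rank A ∧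
      IsGenusSympSubspace ω W h ∧ ∀ v ∈ ω.orthogonal W, μ v = 0 := by
  obtain ⟨S, hScard, hSclosure⟩ := AddGroup.rank_spec A
  let x : Fin (AddGroup.rank A) → A := fun i => ((S.equivFin.symm (Fin.cast hScard.symm i)) : A)
  have hx : ∀ v, μ v ∈ AddSubgroup.closure (Set.range x) := by
    intro v
    have hsub : (S : Set A) ⊆ Set.range x := by
      intro z hz
      refine ⟨Fin.cast hScard (S.equivFin ⟨z, hz⟩), ?_⟩
      show ((S.equivFin.symm (Fin.cast hScard.symm (Fin.cast hScard (S.equivFin ⟨z, hz⟩)))) : A) = z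
      have hfin : Fin.cast hScard.symm (Fin.cast hScard (S.equivFin ⟨z, hz⟩)) =
          S.equivFin ⟨z, hz⟩ := rfl
      rw [hfin, Equiv.symm_apply_apply]
    have h1 : μ v ∈ AddSubgroup.closure (S : Set A) := by rw [hSclosure]; trivial
    exact AddSubgroup.closure_mono hsub h1
  obtain ⟨h, hm, W, hW, hμ⟩ := key_lemma A (AddGroup.rank A) V ω halt hunimod μ x hx
  exact ⟨h, W, hm, hW, hμ⟩
end

section
/- Let V be a free abelian group of finite rank with a symplectic form ω, identified with its dual via ω, and let μ̃ : V → ℤ be a surjective homomorphism. Then there exist a, b ∈ V with ω(a,b) = 1 such that, setting W = ⟨a,b⟩, one has W^⊥ ⊆ ker(μ̃). -/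
/-- Let `V` be a free abelian group of finite rank with a symplectic (nondegenerate
alternating unimodular) form `ω` — so that `ω` identifies `V` with its dual — and let
`μ : V → ℤ` be a surjective homomorphism.  Then there are `a, b ∈ V` with `ω a b = 1`
such that, for `W = ⟨a, b⟩`, the orthogonal complement `W^⊥` lies in `ker μ`. -/
theorem base_case_destabilize
    (V : Type*) [AddCommGroup V] [Module ℤ V] [Module.Free ℤ V] [Module.Finite ℤ V]
    (ω : LinearMap.BilinForm ℤ V) (halt : ω.IsAlt)
    (hunimod : Function.Bijective fun v : V => ω v)
    (μ : V →ₗ[ℤ] ℤ) (hμ : Function.Surjective μ) :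
    ∃ a b : V, ω a b = 1 ∧
      ∀ v ∈ ω.orthogonal (Submodule.span ℤ {a, b}), μ v = 0 := by
  obtain ⟨a, ha⟩ := hunimod.2 μ
  obtain ⟨b, hb⟩ := hμ 1
  have ha' : ∀ x, ω a x = μ x := fun x => by
    simpa using congrArg (fun f => f x) ha
  refine ⟨a, b, by rw [ha' b, hb], fun v hv => ?_⟩
  have : ω a v = 0 := hv a (Submodule.subset_span (by simp))
  rw [ha' v] at this
  exact this
end

section
/- Let A be a finitely generated abelian group and suppose 0 → A' → A → A'' → 0 is a short exact sequence of abelian groups with rank(A') + rank(A'') = rank(A). Let V be a symplectic free abelian group of finite rank and μ : V → A a homomorphism. If the destabilization statement holds for A' and A'' (i.e., for any symplectic free abelian group U and homomorphism ν to A' or A'', there is a symplectic subspace of genus rank of the target with ν vanishing on its orthogonal complement), then it holds for A: there is a symplectic subspace W ⊆ V of genus rank(A) with μ|_{W^⊥} = 0. -/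
open LinearMap (BilinForm)

theorem sympSpan_isCompl {R : Type*} [CommRing R] {V : Type*} [AddCommGroup V] [Module R V]
    (ω : BilinForm R V) (halt : ω.IsAlt) {h : ℕ} (a b : Fin h → V)
    (haa : ∀ i j, ω (a i) (a j) = 0) (hbb : ∀ i j, ω (b i) (b j) = 0)
    (hab : ∀ i j, ω (a i) (b j) = if i = j then 1 else 0) :
    IsCompl (Submodule.span R (Set.range a ∪ Set.range b))
      (ω.orthogonal (Submodule.span R (Set.range a ∪ Set.range b))) := by
  classical
  set W := Submodule.span R (Set.range a ∪ Set.range b) with hWdef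
  have hskew : ∀ x y : V, ω x y = -(ω y x) := by
    intro x y
    have h0 : ω (x + y) (x + y) = 0 := halt _
    simp only [map_add, LinearMap.add_apply] at h0
    rw [halt x, halt y] at h0
    linear_combination h0
  have hba : ∀ i j, ω (b i) (a j) = if i = j then -1 else 0 := by
    intro i j
    rw [hskew, hab]
    by_cases hij : i = j <;> simp [hij, eq_comm]
  set p : V →ₗ[R] V :=
    (∑ j, ((ω.flip (b j)).smulRight (a j))) - (∑ j, ((ω.flip (a j)).smulRight (b j)))
    with hpdef
  have hgen_a : ∀ i, a i ∈ W := fun i => Submodule.subset_span (Or.inl ⟨i, rfl⟩)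
  have hgen_b : ∀ i, b i ∈ W := fun i => Submodule.subset_span (Or.inr ⟨i, rfl⟩)
  have hpW : ∀ v, p v ∈ W := by
    intro v
    rw [hpdef]
    simp only [LinearMap.sub_apply, LinearMap.sum_apply, LinearMap.smulRight_apply,
      LinearMap.BilinForm.flip_apply]
    exact sub_mem (Submodule.sum_mem _ fun j _ => Submodule.smul_mem _ _ (hgen_a j))
      (Submodule.sum_mem _ fun j _ => Submodule.smul_mem _ _ (hgen_b j))
  have hωp : ∀ x v, ω x (p v) =
      (∑ j, ω v (b j) * ω x (a j)) - ∑ j, ω v (a j) * ω x (b j) := by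
    intro x v
    rw [hpdef]
    simp only [LinearMap.sub_apply, LinearMap.sum_apply, LinearMap.smulRight_apply,
      LinearMap.BilinForm.flip_apply, map_sub, map_sum, map_smul, smul_eq_mul]
  have hωa : ∀ i v, ω (a i) (v - p v) = 0 := by
    intro i v
    rw [map_sub, hωp]
    simp only [haa, hab, mul_ite, mul_one, mul_zero, Finset.sum_ite_eq', Finset.sum_ite_eq, Finset.mem_univ,
      if_true, Finset.sum_const_zero]
    rw [hskew v (a i)]
    ring
  have hωb : ∀ i v, ω (b i) (v - p v) = 0 := by
    intro i v
    rw [map_sub, hωp]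
    simp only [hbb, hba, mul_ite, mul_neg, mul_one, mul_zero, Finset.sum_const_zero]
    rw [Finset.sum_ite_eq]
    simp only [Finset.mem_univ, if_true]
    rw [hskew v (b i)]
    ring
  have horth : ∀ v, v - p v ∈ ω.orthogonal W := by
    intro v
    rw [LinearMap.BilinForm.mem_orthogonal_iff]
    intro n hn
    have hker : W ≤ LinearMap.ker (ω.flip (v - p v)) := by
      rw [hWdef, Submodule.span_le]
      rintro x (⟨i, rfl⟩ | ⟨i, rfl⟩) <;>
        simp only [SetLike.mem_coe, LinearMap.mem_ker, LinearMap.BilinForm.flip_apply]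
      · exact hωa i v
      · exact hωb i v
    have hmem := hker hn
    rwa [LinearMap.mem_ker, LinearMap.BilinForm.flip_apply] at hmem
  constructor
  · rw [disjoint_iff_inf_le]
    rintro v ⟨hvW, hvO⟩
    have hWfix : ∀ w ∈ W, p w = w := by
      intro w hw
      have hker : W ≤ LinearMap.ker (p - LinearMap.id) := by
        rw [hWdef, Submodule.span_le]
        rintro x (⟨i, rfl⟩ | ⟨i, rfl⟩) <;>
          · simp only [SetLike.mem_coe, LinearMap.mem_ker, LinearMap.sub_apply,
              LinearMap.id_apply, sub_eq_zero, hpdef, LinearMap.sum_apply,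
              LinearMap.smulRight_apply, LinearMap.BilinForm.flip_apply]
            simp [haa, hbb, hab, hba, ite_smul]
      have hmem := hker hw
      rwa [LinearMap.mem_ker, LinearMap.sub_apply, LinearMap.id_apply, sub_eq_zero] at hmem
    have hcb : ∀ j, ω v (b j) = 0 := fun j => by
      rw [hskew, hvO (b j) (hgen_b j), neg_zero]
    have hca : ∀ j, ω v (a j) = 0 := fun j => by
      rw [hskew, hvO (a j) (hgen_a j), neg_zero]
    have hpv0 : p v = 0 := by
      rw [hpdef]
      simp only [LinearMap.sub_apply, LinearMap.sum_apply, LinearMap.smulRight_apply,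
        LinearMap.BilinForm.flip_apply]
      simp [hca, hcb]
    have hfix := hWfix v hvW
    simp only [Submodule.mem_bot]
    rw [← hfix, hpv0]
  · rw [codisjoint_iff_le_sup]
    intro v _
    rw [Submodule.mem_sup]
    exact ⟨p v, hpW v, v - p v, horth v, by abel⟩

/-- The destabilization statement for a target abelian group `B` and genus `r`:
for every symplectic free abelian group `U` of finite rank and every homomorphism
`ν : U → B`, there is a symplectic subspace of genus `r` on whose orthogonal complement
`ν` vanishes. -/
def DestabProp (B : Type*) [AddCommGroup B] (r : ℕ) : Prop :=
  ∀ (U : Type) (_ : AddCommGroup U) (_ : Module ℤ U) (_ : Module.Free ℤ U)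
    (_ : Module.Finite ℤ U) (ω : LinearMap.BilinForm ℤ U),
    ω.IsAlt → (Function.Bijective fun u : U => ω u) →
    ∀ ν : U →+ B, ∃ W : Submodule ℤ U,
      IsGenusSympSubspace ω W r ∧ ∀ u ∈ ω.orthogonal W, ν u = 0

/-- The inductive step of Lemma 3.2: given a short exact sequence
`0 → A' → A → A ⧸ A' → 0` with `rank A' + rank (A ⧸ A') = rank A`, if the
destabilization statement holds for `A'` and for `A ⧸ A'` (with genera their ranks),
then it holds for `A`: for any symplectic free abelian group `V` of finite rank and any
homomorphism `μ : V → A`, there is a symplectic subspace `W ⊆ V` of genus `rank A` with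
`μ` vanishing on `W^⊥`. -/
theorem destabilization_inductive_step
    (A : Type*) [AddCommGroup A] [AddGroup.FG A]
    (A' : AddSubgroup A) [AddGroup.FG A'] [AddGroup.FG (A ⧸ A')]
    (hrank : AddGroup.rank A' + AddGroup.rank (A ⧸ A') = AddGroup.rank A)
    (hdest' : DestabProp A' (AddGroup.rank A'))
    (hdest'' : DestabProp (A ⧸ A') (AddGroup.rank (A ⧸ A')))
    (V : Type) [AddCommGroup V] [Module ℤ V] [Module.Free ℤ V] [Module.Finite ℤ V]
    (ω : LinearMap.BilinForm ℤ V) (halt : ω.IsAlt)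
    (hunimod : Function.Bijective fun v : V => ω v)
    (μ : V →+ A) :
    ∃ W : Submodule ℤ V, IsGenusSympSubspace ω W (AddGroup.rank A) ∧
      ∀ v ∈ ω.orthogonal W, μ v = 0 := by
  classical
  -- Step 1: apply the destabilization hypothesis for `A ⧸ A'` to `mk' ∘ μ`.
  obtain ⟨W'', hW''symp, hvan''⟩ :=
    hdest'' V ‹_› ‹_› ‹_› ‹_› ω halt hunimod ((QuotientAddGroup.mk' A').comp μ)
  obtain ⟨a'', b'', hW''eq, haa'', hbb'', hab'', hcompl''⟩ := hW''symp
  set U : Submodule ℤ V := ω.orthogonal W'' with hUdef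
  letI : Module ℤ ↥U := U.module
  -- `U` is free and finite
  have : Fintype (Module.Free.ChooseBasisIndex ℤ V) := Module.Free.ChooseBasisIndex.fintype ℤ V
  obtain ⟨n, basU⟩ := U.basisOfPid (Module.Free.chooseBasis ℤ V)
  have hfreeU := Module.Free.of_basis basU
  have hfinU := Module.Finite.of_basis basU
  -- the restricted form on `U`
  set ωU := ω.restrict U with hωU
  have haltU : ωU.IsAlt := fun x => halt x
  have hUmem : ∀ x : V, x ∈ U → ∀ w ∈ W'', ω w x = 0 := by
    intro x hx w hw
    exact (LinearMap.BilinForm.mem_orthogonal_iff.mp hx) w hw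
  have hskew : ∀ x y : V, ω x y = -(ω y x) := by
    intro x y
    have h0 : ω (x + y) (x + y) = 0 := halt _
    simp only [map_add, LinearMap.add_apply] at h0
    rw [halt x, halt y] at h0
    linarith
  have hUmem' : ∀ x : V, x ∈ U → ∀ w ∈ W'', ω x w = 0 := by
    intro x hx w hw
    rw [hskew, hUmem x hx w hw, neg_zero]
  -- the restricted form is unimodular
  have hbijU : Function.Bijective fun u : U => ωU u := by
    constructor
    · intro u₁ u₂ h12
      apply Subtype.ext
      apply hunimod.1
      show ω (u₁ : V) = ω (u₂ : V)
      ext v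
      have hvtop : v ∈ W'' ⊔ U := by rw [hcompl''.sup_eq_top]; trivial
      obtain ⟨w, hw, x, hx, rfl⟩ := Submodule.mem_sup.mp hvtop
      have h1 : ω (u₁ : V) x = ω (u₂ : V) x := by
        have h12' : ωU u₁ = ωU u₂ := h12
        exact LinearMap.congr_fun h12' ⟨x, hx⟩
      rw [map_add, map_add, hUmem' u₁ u₁.2 w hw, hUmem' u₂ u₂.2 w hw, h1]
    · intro f
      obtain ⟨v, hv⟩ := hunimod.2 (f ∘ₗ (U.linearProjOfIsCompl W'' hcompl''.symm))
      have hvtop : v ∈ W'' ⊔ U := by rw [hcompl''.sup_eq_top]; trivial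
      obtain ⟨w, hw, x, hx, rfl⟩ := Submodule.mem_sup.mp hvtop
      refine ⟨⟨x, hx⟩, ?_⟩
      show ωU ⟨x, hx⟩ = f
      apply LinearMap.ext
      intro y
      have hv' : ω (w + x) = f ∘ₗ (U.linearProjOfIsCompl W'' hcompl''.symm) := hv
      have hy : ω (w + x) (y : V) = f ((U.linearProjOfIsCompl W'' hcompl''.symm) (y : V)) :=
        LinearMap.congr_fun hv' (y : V)
      have hproj : (U.linearProjOfIsCompl W'' hcompl''.symm) (y : V) = y :=
        Submodule.linearProjOfIsCompl_apply_left hcompl''.symm y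
      show ω (x : V) (y : V) = f y
      have : ω w (y : V) = 0 := hUmem y y.2 w hw
      rw [map_add, LinearMap.add_apply, this, zero_add, hproj] at hy
      exact hy
  -- μ restricted to U lands in A'
  have hmemA' : ∀ x : U, μ (x : V) ∈ A' := by
    intro x
    have := hvan'' (x : V) x.2
    simpa using (QuotientAddGroup.eq_zero_iff (μ (x : V))).mp this
  set ν' : U →+ A' := AddMonoidHom.codRestrict (μ.comp U.subtype.toAddMonoidHom) A' hmemA'
    with hν'
  -- Step 2: apply the destabilization hypothesis for `A'` on `U`.
  obtain ⟨W', hW'symp, hvan'⟩ := hdest' U _ U.module hfreeU hfinU ωU haltU hbijU ν'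
  obtain ⟨a', b', hW'eq, haa', hbb', hab', hcompl'⟩ := hW'symp
  -- Step 3: combine the two symplectic subspaces.
  set aV : Fin (AddGroup.rank A') → V := fun i => ((a' i : U) : V) with haV
  set bV : Fin (AddGroup.rank A') → V := fun i => ((b' i : U) : V) with hbV
  set aC := Fin.append aV a'' with haC
  set bC := Fin.append bV b'' with hbC
  have hgen_a'' : ∀ i, a'' i ∈ W'' := fun i => hW''eq ▸ Submodule.subset_span (Or.inl ⟨i, rfl⟩)
  have hgen_b'' : ∀ i, b'' i ∈ W'' := fun i => hW''eq ▸ Submodule.subset_span (Or.inr ⟨i, rfl⟩)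
  have haVU : ∀ i, aV i ∈ U := fun i => (a' i).2
  have hbVU : ∀ i, bV i ∈ U := fun i => (b' i).2
  -- the symplectic relations for the combined families
  have haaC : ∀ i j, ω (aC i) (aC j) = 0 := by
    intro i j
    refine Fin.addCases (fun i0 => ?_) (fun i0 => ?_) i <;>
      refine Fin.addCases (fun j0 => ?_) (fun j0 => ?_) j <;>
      simp only [haC, Fin.append_left, Fin.append_right]
    · exact haa' i0 j0
    · exact hUmem' _ (haVU i0) _ (hgen_a'' j0)
    · exact hUmem _ (haVU j0) _ (hgen_a'' i0)
    · exact haa'' i0 j0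
  have hbbC : ∀ i j, ω (bC i) (bC j) = 0 := by
    intro i j
    refine Fin.addCases (fun i0 => ?_) (fun i0 => ?_) i <;>
      refine Fin.addCases (fun j0 => ?_) (fun j0 => ?_) j <;>
      simp only [hbC, Fin.append_left, Fin.append_right]
    · exact hbb' i0 j0
    · exact hUmem' _ (hbVU i0) _ (hgen_b'' j0)
    · exact hUmem _ (hbVU j0) _ (hgen_b'' i0)
    · exact hbb'' i0 j0
  have habC : ∀ i j, ω (aC i) (bC j) = if i = j then 1 else 0 := by
    intro i j
    refine Fin.addCases (fun i0 => ?_) (fun i0 => ?_) i <;>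
      refine Fin.addCases (fun j0 => ?_) (fun j0 => ?_) j <;>
      simp only [haC, hbC, Fin.append_left, Fin.append_right]
    · rw [show ω (aV i0) (bV j0) = (if i0 = j0 then 1 else 0) from hab' i0 j0]
      congr 1
      simp [Fin.ext_iff]
    · rw [hUmem' _ (haVU i0) _ (hgen_b'' j0)]
      have : (Fin.castAdd _ i0 : Fin _) ≠ Fin.natAdd _ j0 := by
        intro hEq
        have hv := congrArg Fin.val hEq
        have hlt := i0.isLt
        simp at hv
        omega
      simp [this]
    · rw [hUmem _ (hbVU j0) _ (hgen_a'' i0)]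
      have : (Fin.natAdd _ i0 : Fin _) ≠ Fin.castAdd _ j0 := by
        intro hEq
        have hv := congrArg Fin.val hEq
        have hlt := j0.isLt
        simp at hv
        omega
      simp [this]
    · rw [hab'' i0 j0]
      congr 1
      simp [Fin.ext_iff]
  set W : Submodule ℤ V := Submodule.span ℤ (Set.range aC ∪ Set.range bC) with hWdef
  have hcompl : IsCompl W (ω.orthogonal W) := sympSpan_isCompl ω halt aC bC haaC hbbC habC
  have hgenus : IsGenusSympSubspace ω W (AddGroup.rank A' + AddGroup.rank (A ⧸ A')) :=
    ⟨aC, bC, hWdef, haaC, hbbC, habC, hcompl⟩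
  rw [← hrank]
  refine ⟨W, hgenus, ?_⟩
  -- vanishing on the orthogonal complement
  intro v hv
  have hvW : ∀ x ∈ W, ω x v = 0 := fun x hx =>
    (LinearMap.BilinForm.mem_orthogonal_iff.mp hv) x hx
  have haCW : ∀ i, aC i ∈ W := fun i => Submodule.subset_span (Or.inl ⟨i, rfl⟩)
  have hbCW : ∀ i, bC i ∈ W := fun i => Submodule.subset_span (Or.inr ⟨i, rfl⟩)
  have hvU : v ∈ U := by
    rw [hUdef, LinearMap.BilinForm.mem_orthogonal_iff]
    intro m hm
    have hWW : W'' ≤ W := by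
      rw [hW''eq, Submodule.span_le]
      rintro x (⟨i, rfl⟩ | ⟨i, rfl⟩)
      · have : a'' i = aC (Fin.natAdd _ i) := (Fin.append_right aV a'' i).symm
        rw [this]; exact haCW _
      · have : b'' i = bC (Fin.natAdd _ i) := (Fin.append_right bV b'' i).symm
        rw [this]; exact hbCW _
    exact hvW m (hWW hm)
  have hvO' : (⟨v, hvU⟩ : U) ∈ ωU.orthogonal W' := by
    rw [LinearMap.BilinForm.mem_orthogonal_iff]
    intro m hm
    show ω (m : V) v = 0
    have hker : W' ≤ LinearMap.ker ((ω.flip v) ∘ₗ U.subtype) := by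
      rw [hW'eq, Submodule.span_le]
      rintro x (⟨i, rfl⟩ | ⟨i, rfl⟩) <;>
        simp only [SetLike.mem_coe, LinearMap.mem_ker, LinearMap.comp_apply,
          Submodule.coe_subtype, LinearMap.flip_apply]
      · have : ((a' i : U) : V) = aC (Fin.castAdd _ i) := (Fin.append_left aV a'' i).symm
        rw [this]; exact hvW _ (haCW _)
      · have : ((b' i : U) : V) = bC (Fin.castAdd _ i) := (Fin.append_left bV b'' i).symm
        rw [this]; exact hvW _ (hbCW _)
    have hm2 := hker hm
    rw [LinearMap.mem_ker, LinearMap.comp_apply, LinearMap.BilinForm.flip_apply] at hm2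
    exact hm2
  have := hvan' ⟨v, hvU⟩ hvO'
  have hμ : μ v = ((ν' ⟨v, hvU⟩ : A') : A) := rfl
  rw [hμ, this, ZeroMemClass.coe_zero]
end
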